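/- The Sasaki lifted metric G on the tangent bundle TM of a Finsler manifold (M,F) is bundle-like for the foliation V^⊥TM (the distribution G-orthogonal to the vertical Liouville vector field L in TTM); that is, G(∇_L L, X) + G(∇_L L, X) = 0 for all sections X of V^⊥TM, where ∇ is the Levi-Civita connection of G. -/

import Mathlib

/-!
A local-coordinate framework for the geometry of the tangent bundle `TM` of an
`n`-dimensional Finsler manifold `(M, F)`, following the paper
"A frame on tangent bundle of a Finsler manifold and the natural foliations".

All geometric objects are described through their components on a chart domain
`U` of `TM` (avoiding the zero section): a point `p : Pt n` is the pair of
coordinates `(x^i, y^i)`, and a vector field on `TM` is given by its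
components in the natural frame `(∂/∂x^i, ∂/∂y^i)`.
-/

open scoped BigOperators

noncomputable section

namespace FinslerFoliations

/-- A point of the tangent bundle `TM` in local coordinates:
`p.1 = (x^i)` is the base point and `p.2 = (y^i)` is the fibre coordinate. -/
abbrev Pt (n : ℕ) : Type := (Fin n → ℝ) × (Fin n → ℝ)

/-- A (local) vector field on `TM`, given by its components in the natural
frame: `(X p).1 i` is the coefficient of `∂/∂x^i` and `(X p).2 i` the one of
`∂/∂y^i`. -/
abbrev VF (n : ℕ) : Type := Pt n → Pt n

variable {n : ℕ}

/-- The coordinate vector `∂/∂x^i`. -/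
def ex (i : Fin n) : Pt n := (Pi.single i 1, 0)

/-- The coordinate vector `∂/∂y^i`. -/
def ey (i : Fin n) : Pt n := (0, Pi.single i 1)

/-- Partial derivative of a scalar function in the constant direction `v`. -/
def pd (v : Pt n) (f : Pt n → ℝ) (p : Pt n) : ℝ := fderiv ℝ f p v

/-- Derivative of a scalar function along a vector field. -/
def Dv (X : VF n) (f : Pt n → ℝ) (p : Pt n) : ℝ := fderiv ℝ f p (X p)

/-- The Lie bracket of two vector fields, in coordinates. -/
def lie (X Y : VF n) : VF n := fun p => fderiv ℝ Y p (X p) - fderiv ℝ X p (Y p)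

/-- Local-coordinate data of an `n`-dimensional Finsler manifold `(M, F)` on a
chart domain `U ⊆ TM` avoiding the zero section: the fundamental function `F`
(smooth, positive and positively `1`-homogeneous in `y`), the fundamental
tensor `g_{ij} = ½ ∂²F²/∂y^i∂y^j` (symmetric and positive definite) with its
inverse `g^{ij}`, the spray coefficients
`G^i = (g^{ij}/4)(∂²F²/∂y^j∂x^k y^k − ∂F²/∂x^j)` and the nonlinear connection
coefficients `G_i^j = ∂G^j/∂y^i`. -/
structure Chart (n : ℕ) : Type where
  /-- the chart domain in `TM` -/
  U : Set (Pt n)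
  hUopen : IsOpen U
  hUslit : ∀ p ∈ U, p.2 ≠ 0
  /-- the fundamental function `F` -/
  F : Pt n → ℝ
  Fpos : ∀ p ∈ U, 0 < F p
  Fsmooth : ContDiffOn ℝ (⊤ : ℕ∞) F U
  Fhomog : ∀ p ∈ U, ∀ t : ℝ, 0 < t → (p.1, t • p.2) ∈ U →
    F (p.1, t • p.2) = t * F p
  /-- the fundamental tensor `g_{ij}` -/
  g : Fin n → Fin n → Pt n → ℝ
  gdef : ∀ i j, ∀ p ∈ U,
    g i j p = (1/2) * pd (ey i) (pd (ey j) (fun q => F q ^ 2)) p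
  gsmooth : ∀ i j, ContDiffOn ℝ (⊤ : ℕ∞) (g i j) U
  gsymm : ∀ i j, ∀ p ∈ U, g i j p = g j i p
  gposdef : ∀ p ∈ U, ∀ v : Fin n → ℝ, v ≠ 0 →
    0 < ∑ i, ∑ j, g i j p * v i * v j
  /-- the inverse `g^{ij}` of the fundamental tensor -/
  ginv : Fin n → Fin n → Pt n → ℝ
  hginv : ∀ i j, ∀ p ∈ U,
    (∑ k, g i k p * ginv k j p) = if i = j then (1:ℝ) else 0
  /-- the spray coefficients `G^i` -/
  spray : Fin n → Pt n → ℝ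
  spraydef : ∀ i, ∀ p ∈ U, spray i p = (1/4) * ∑ j, ginv i j p *
      ((∑ k, pd (ey j) (pd (ex k) (fun q => F q ^ 2)) p * p.2 k)
        - pd (ex j) (fun q => F q ^ 2) p)
  /-- the nonlinear connection coefficients `G_i^j` -/
  N : Fin n → Fin n → Pt n → ℝ
  Ndef : ∀ i j, ∀ p ∈ U, N i j p = pd (ey i) (spray j) p
  Nsmooth : ∀ i j, ContDiffOn ℝ (⊤ : ℕ∞) (N i j) U

variable (fc : Chart n)

/-- the vertical frame field `∂/∂y^i`. -/
def dyv (i : Fin n) : VF n := fun _ => ey i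

/-- the horizontal frame field `δ/δx^i = ∂/∂x^i − G_i^j ∂/∂y^j`. -/
def ddx (i : Fin n) : VF n := fun p => (Pi.single i 1, fun j => -(fc.N i j p))

/-- the vertical Liouville vector field `L = y^i ∂/∂y^i`. -/
def LV : VF n := fun p => ((0 : Fin n → ℝ), p.2)

/-- the horizontal Liouville vector field `ξ = y^i δ/δx^i`. -/
def XI : VF n := fun p => (p.2, fun j => -(∑ i, p.2 i * fc.N i j p))

/-- the dual coframe `δy^i = dy^i + G_j^i dx^j`, applied to a tangent vector. -/
def dely (i : Fin n) (p : Pt n) (v : Pt n) : ℝ := v.2 i + ∑ j, fc.N j i p * v.1 j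

/-- the Sasaki lifted metric `G = g_{ij} dx^i ⊗ dx^j + g_{ij} δy^i ⊗ δy^j`. -/
def Gs (p : Pt n) (v w : Pt n) : ℝ :=
  ∑ i, ∑ j, fc.g i j p * (v.1 i * w.1 j + dely fc i p v * dely fc j p w)

/-- the natural almost complex structure
`J = δ/δx^i ⊗ δy^i − ∂/∂y^i ⊗ dx^i`, as a pointwise endomorphism. -/
def Jm (p : Pt n) (v : Pt n) : Pt n :=
  (fun i => dely fc i p v,
   fun k => -(∑ i, dely fc i p v * fc.N i k p) - v.1 k)

/-- `J` applied to a vector field. -/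
def Jvf (X : VF n) : VF n := fun p => Jm fc p (X p)

/-- the curvature coefficients `R^k_{ij} = δG_i^k/δx^j − δG_j^k/δx^i` of the
nonlinear connection. -/
def Rc (i j k : Fin n) (p : Pt n) : ℝ :=
  Dv (ddx fc j) (fc.N i k) p - Dv (ddx fc i) (fc.N j k) p

/-- the Cartan tensor `g_{ijk} = ½ ∂g_{ij}/∂y^k`. -/
def Cartan (i j k : Fin n) (p : Pt n) : ℝ := (1/2) * pd (ey k) (fc.g i j) p

/-- the vertical adapted frame field `∂̄/∂̄y^a = E_a^i ∂/∂y^i`. -/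
def vb (E : Fin (n-1) → Fin n → Pt n → ℝ) (a : Fin (n-1)) : VF n :=
  fun p => ((0 : Fin n → ℝ), fun i => E a i p)

/-- the horizontal adapted frame field `δ̄/δ̄x^a = J(∂̄/∂̄y^a)`. -/
def hb (E : Fin (n-1) → Fin n → Pt n → ℝ) (a : Fin (n-1)) : VF n :=
  fun p => Jm fc p (vb E a p)

/-- `E` is the coefficient matrix of an adapted local frame
`∂̄/∂̄y^a = E_a^i ∂/∂y^i`, `a = 1, …, n−1`, of the distribution `V'TM` (the
`G`-orthogonal complement of the vertical Liouville field `L` inside the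
vertical distribution `VTM`): the coefficients are smooth, pointwise linearly
independent, and each `∂̄/∂̄y^a` is `G`-orthogonal to `L`. -/
def IsAdaptedFrame (E : Fin (n-1) → Fin n → Pt n → ℝ) : Prop :=
  (∀ a i, ContDiffOn ℝ (⊤ : ℕ∞) (E a i) fc.U) ∧
  (∀ p ∈ fc.U, LinearIndependent ℝ (fun a : Fin (n-1) => (fun i => E a i p))) ∧
  (∀ a, ∀ p ∈ fc.U, Gs fc p (vb E a p) (LV p) = 0)

/-- `g_{ab} = g_{ij} E_a^i E_b^j`, the components of the Sasaki metric in the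
adapted frame. -/
def gb (E : Fin (n-1) → Fin n → Pt n → ℝ) (p : Pt n) (a b : Fin (n-1)) : ℝ :=
  ∑ i, ∑ j, fc.g i j p * E a i p * E b j p

/-- the matrix `(g_{ab})`. -/
def gbMat (E : Fin (n-1) → Fin n → Pt n → ℝ) (p : Pt n) :
    Matrix (Fin (n-1)) (Fin (n-1)) ℝ :=
  Matrix.of fun a b => gb fc E p a b

/-- `(g^{ab})`, the inverse of the matrix `(g_{ab})`. -/
def gbInv (E : Fin (n-1) → Fin n → Pt n → ℝ) (p : Pt n) (a b : Fin (n-1)) : ℝ :=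
  (gbMat fc E p)⁻¹ a b

/-- `g_{abc} = ½ E_a^i E_b^j E_c^k g_{ijk}`, the Cartan tensor in the adapted
frame. -/
def CartanBar (E : Fin (n-1) → Fin n → Pt n → ℝ) (a b c : Fin (n-1))
    (p : Pt n) : ℝ :=
  (1/2) * ∑ i, ∑ j, ∑ k, E a i p * E b j p * E c k p * Cartan fc i j k p

/-- `R_{cab} = E_c^i E_a^j E_b^k R^h_{jk} g_{hi}`, the lowered curvature of the
nonlinear connection in the adapted frame. -/
def Rlow (E : Fin (n-1) → Fin n → Pt n → ℝ) (c a b : Fin (n-1)) (p : Pt n) : ℝ :=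
  ∑ i, ∑ j, ∑ k, ∑ h, E c i p * E a j p * E b k p * Rc fc j k h p * fc.g h i p

/-- `nab` is the Levi-Civita connection of the Sasaki metric `G` on the chart
domain, characterized by the Koszul formula
`2G(∇_X Y, Z) = X G(Y,Z) + Y G(X,Z) − Z G(X,Y)
  − G([X,Z],Y) − G([Y,Z],X) + G([X,Y],Z)`. -/
def IsLeviCivita (nab : VF n → VF n → VF n) : Prop :=
  ∀ X Y Z : VF n,
    ContDiffOn ℝ (⊤ : ℕ∞) X fc.U → ContDiffOn ℝ (⊤ : ℕ∞) Y fc.U →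
    ContDiffOn ℝ (⊤ : ℕ∞) Z fc.U → ∀ p ∈ fc.U,
    2 * Gs fc p (nab X Y p) (Z p) =
      Dv X (fun q => Gs fc q (Y q) (Z q)) p
      + Dv Y (fun q => Gs fc q (X q) (Z q)) p
      - Dv Z (fun q => Gs fc q (X q) (Y q)) p
      - Gs fc p (lie X Z p) (Y p)
      - Gs fc p (lie Y Z p) (X p)
      + Gs fc p (lie X Y p) (Z p)

/-- the `G`-orthogonal projection of a vector field onto the line spanned by
the vertical Liouville field `L` (the normal direction to the indicatrix). -/
def projL (X : VF n) : VF n :=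
  fun p => (Gs fc p (X p) (LV p) / Gs fc p (LV p) (LV p)) • LV p

/-- the curvature tensor `R(X,Y)Z = ∇_X ∇_Y Z − ∇_Y ∇_X Z − ∇_{[X,Y]} Z` of a
connection. -/
def curv (nab : VF n → VF n → VF n) (X Y Z : VF n) : VF n :=
  fun p => nab X (nab Y Z) p - nab Y (nab X Z) p - nab (lie X Y) Z p

/-- membership in `V'TM`: vertical and `G`-orthogonal to `L`. -/
def InV' (p v : Pt n) : Prop := v.1 = 0 ∧ Gs fc p v (LV p) = 0

/-- membership in `V^⊥TM`: `G`-orthogonal to `L`. -/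
def InVperp (p v : Pt n) : Prop := Gs fc p v (LV p) = 0

/-- membership in `HTM ⊕ ⟨L⟩`, the `G`-orthogonal complement of `V'TM`. -/
def InHL (p v : Pt n) : Prop := ∃ c : ℝ, ∀ i, dely fc i p v = c * p.2 i

/-- membership in the line spanned by the vertical Liouville field `L`. -/
def InL (p v : Pt n) : Prop := ∃ c : ℝ, v = c • LV p

/-- membership in the plane spanned by `L` and `ξ`. -/
def InLXi (p v : Pt n) : Prop := ∃ c d : ℝ, v = c • LV p + d • XI fc p

/-- membership in the `G`-orthogonal complement of `⟨L, ξ⟩`. -/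
def InLXiPerp (p v : Pt n) : Prop :=
  Gs fc p v (LV p) = 0 ∧ Gs fc p v (XI fc p) = 0

/-- the contact `1`-form `η = y^i g_{ij} dx^j` of the indicatrix bundle,
applied to a tangent vector. -/
def etaC (p : Pt n) (v : Pt n) : ℝ := ∑ i, ∑ j, p.2 i * fc.g i j p * v.1 j

/-- the `(1,1)`-tensor `φ` of the contact structure of the indicatrix bundle:
`φ = J` on the contact distribution `D` and `φ(ξ) = 0`; on tangent vectors of
`IM` it is given by `φ(v) = J v + η(v) L`. -/
def phiC (p : Pt n) (v : Pt n) : Pt n := Jm fc p v + etaC fc p v • LV p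

/-- `φ` applied to a vector field. -/
def phiVF (X : VF n) : VF n := fun p => phiC fc p (X p)

/-- `η` applied to a vector field, as a scalar function. -/
def etaVF (X : VF n) : Pt n → ℝ := fun p => etaC fc p (X p)

/-- the exterior derivative `dη(X,Y) = X(η(Y)) − Y(η(X)) − η([X,Y])`. -/
def dEta (X Y : VF n) (p : Pt n) : ℝ :=
  Dv X (etaVF fc Y) p - Dv Y (etaVF fc X) p - etaC fc p (lie X Y p)

/-- the normality tensor `N^{(1)} = [φ,φ] + 2 dη ⊗ ξ` of the contact structure
of the indicatrix bundle, evaluated on vector fields, where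
`[φ,φ](X,Y) = φ²[X,Y] + [φX,φY] − φ[φX,Y] − φ[X,φY]` is the Nijenhuis torsion
of `φ`. -/
def Ntensor (X Y : VF n) : VF n := fun p =>
  phiC fc p (phiC fc p (lie X Y p)) + lie (phiVF fc X) (phiVF fc Y) p
    - phiC fc p (lie (phiVF fc X) Y p) - phiC fc p (lie X (phiVF fc Y) p)
    + (2 * dEta fc X Y p) • XI fc p

/-- a vector field of `TM` is tangent to the indicatrix bundle
`IM = {F = 1}` (equivalently, `G`-orthogonal to the normal field `L` along
`IM`). -/
def TangentIM (X : VF n) : Prop :=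
  ∀ p ∈ fc.U, fc.F p = 1 → Gs fc p (X p) (LV p) = 0

/-- The indicatrix bundle `IM`, with its natural contact metric structure
`(φ, η, ξ, Ḡ)`, is a Sasakian manifold: the contact structure is normal, i.e.
the tensor `N^{(1)} = [φ,φ] + 2 dη ⊗ ξ` vanishes on vector fields tangent to
`IM`. -/
def IsSasakianIM : Prop :=
  ∀ X Y : VF n, ContDiffOn ℝ (⊤ : ℕ∞) X fc.U → ContDiffOn ℝ (⊤ : ℕ∞) Y fc.U →
    TangentIM fc X → TangentIM fc Y →
    ∀ p ∈ fc.U, fc.F p = 1 → Ntensor fc X Y p = 0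

/-- the Nijenhuis tensor of the natural almost complex structure `J`:
`N_J(X,Y) = [JX,JY] − J[JX,Y] − J[X,JY] + J²[X,Y]`, with `J² = −Id`. -/
def NijJ (X Y : VF n) : VF n := fun p =>
  lie (Jvf fc X) (Jvf fc Y) p - Jm fc p (lie (Jvf fc X) Y p)
    - Jm fc p (lie X (Jvf fc Y) p) - lie X Y p

/-- the almost complex structure `J̄` on `TM ≅ IM × ℝ` induced by the contact
structure `(φ, η, ξ)` of the indicatrix bundle via
`J̄(X + f L) = φ(X) − f ξ + η(X) L`, where `X` is tangent to `IM`;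
a tangent vector `v` is decomposed as `v = vᵀ + f L` with
`f = G(v,L)/G(L,L)` and `vᵀ` tangent to the indicatrix. -/
def Jbar (p : Pt n) (v : Pt n) : Pt n :=
  phiC fc p (v - (Gs fc p v (LV p) / Gs fc p (LV p) (LV p)) • LV p)
    - (Gs fc p v (LV p) / Gs fc p (LV p) (LV p)) • XI fc p
    + etaC fc p (v - (Gs fc p v (LV p) / Gs fc p (LV p) (LV p)) • LV p) • LV p
/-!
Put `E = F²`. Since `G(L, L) = E`, the Koszul formula with `X = Y = L` reads
`G(∇_L L, Z) = L(G(L, Z)) − ½ Z(E) − G([L, Z], L)`. On the frame `(δ/δx^k, ∂/∂y^k)` this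
equals `G(L, Z)`: for `Z = ∂/∂y^k` because `G(L, ∂/∂y^k) = ½ ∂E/∂y^k` is `1`-homogeneous in `y`
and `[L, ∂/∂y^k] = −∂/∂y^k`; for `Z = δ/δx^k` because `G(L, δ/δx^k) = 0`, `[L, δ/δx^k] = 0`
and `δE/δx^k = 0`, both consequences of the homogeneity of the spray. So `G(∇_L L, ·) = G(L, ·)`,
which vanishes on `V^⊥TM`.
-/

section

variable {E F : Type*} [SMul ℝ F]

def IsFiberHomogeneous (U : Set (E × F)) (m : ℕ) (h : E × F → ℝ) : Prop :=
  ∀ q ∈ U, ∀ t : ℝ, 0 < t → (q.1, t • q.2) ∈ U → h (q.1, t • q.2) = t ^ m * h q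

namespace IsFiberHomogeneous

variable {U : Set (E × F)} {m m' : ℕ} {h h' : E × F → ℝ}

lemma congr (hh : IsFiberHomogeneous U m h) (he : ∀ q ∈ U, h q = h' q) :
    IsFiberHomogeneous U m h' := by
  intro q hq t ht htq
  rw [← he _ hq, ← he _ htq]
  exact hh q hq t ht htq

lemma const_mul (hh : IsFiberHomogeneous U m h) (c : ℝ) :
    IsFiberHomogeneous U m (fun q => c * h q) := by
  intro q hq t ht htq
  simp only [hh q hq t ht htq]
  ring

lemma mul (hh : IsFiberHomogeneous U m h) (hh' : IsFiberHomogeneous U m' h') :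
    IsFiberHomogeneous U (m + m') (fun q => h q * h' q) := by
  intro q hq t ht htq
  simp only [hh q hq t ht htq, hh' q hq t ht htq]
  ring

lemma pow (hh : IsFiberHomogeneous U m h) (k : ℕ) :
    IsFiberHomogeneous U (m * k) (fun q => h q ^ k) := by
  intro q hq t ht htq
  simp only [hh q hq t ht htq]
  ring

lemma sub (hh : IsFiberHomogeneous U m h) (hh' : IsFiberHomogeneous U m h') :
    IsFiberHomogeneous U m (fun q => h q - h' q) := by
  intro q hq t ht htq
  simp only [hh q hq t ht htq, hh' q hq t ht htq]
  ring

lemma sum {ι : Type*} (s : Finset ι) {f : ι → E × F → ℝ}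
    (hf : ∀ i ∈ s, IsFiberHomogeneous U m (f i)) :
    IsFiberHomogeneous U m (fun q => ∑ i ∈ s, f i q) := by
  intro q hq t ht htq
  rw [Finset.mul_sum]
  exact Finset.sum_congr rfl fun i hi => hf i hi q hq t ht htq

end IsFiberHomogeneous

end

namespace IsFiberHomogeneous

variable {E F : Type*} [NormedAddCommGroup E] [NormedSpace ℝ E]
  [NormedAddCommGroup F] [NormedSpace ℝ F] {U : Set (E × F)} {m : ℕ} {h : E × F → ℝ}

/-- Euler's theorem for homogeneous functions. -/
lemma fderiv_apply_vertical (hU : IsOpen U) (hh : IsFiberHomogeneous U m h) {p : E × F}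
    (hp : p ∈ U) (hd : DifferentiableAt ℝ h p) :
    fderiv ℝ h p (0, p.2) = m * h p := by
  have hγ : HasDerivAt (fun t : ℝ => (p.1, t • p.2)) ((0 : E), p.2) 1 :=
    (hasDerivAt_const 1 p.1).prodMk (by simpa using (hasDerivAt_id (1 : ℝ)).smul_const p.2)
  have hone : (p.1, (1 : ℝ) • p.2) = p := by simp
  have hleft : HasDerivAt (fun t : ℝ => h (p.1, t • p.2)) (fderiv ℝ h p (0, p.2)) 1 := by
    have hfd : HasFDerivAt h (fderiv ℝ h p) (p.1, (1 : ℝ) • p.2) := by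
      rw [hone]; exact hd.hasFDerivAt
    exact hfd.comp_hasDerivAt 1 hγ
  have hright : HasDerivAt (fun t : ℝ => t ^ m * h p) (m * 1 ^ (m - 1) * h p) 1 :=
    (hasDerivAt_pow m 1).mul_const _
  have hev : (fun t : ℝ => h (p.1, t • p.2)) =ᶠ[nhds 1] fun t => t ^ m * h p := by
    have hmem : ∀ᶠ t in nhds (1 : ℝ), (p.1, t • p.2) ∈ U :=
      hγ.continuousAt.preimage_mem_nhds (by simpa [hone] using hU.mem_nhds hp)
    filter_upwards [hmem, eventually_gt_nhds one_pos] with t htU ht using hh p hp t ht htU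
  simpa using (hleft.congr_of_eventuallyEq hev.symm).unique hright

lemma fderiv_apply_smul (hU : IsOpen U) (hh : IsFiberHomogeneous U m h)
    (hd : DifferentiableOn ℝ h U) (w : E × F) {q : E × F} (hq : q ∈ U) {t : ℝ} (ht : 0 < t)
    (htq : (q.1, t • q.2) ∈ U) :
    fderiv ℝ h (q.1, t • q.2) (w.1, t • w.2) = t ^ m * fderiv ℝ h q w := by
  let scale : E × F →L[ℝ] E × F :=
    (ContinuousLinearMap.fst ℝ E F).prod (t • ContinuousLinearMap.snd ℝ E F)
  have hV : U ∩ scale ⁻¹' U ∈ nhds q :=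
    (hU.inter (hU.preimage scale.continuous)).mem_nhds ⟨hq, htq⟩
  have hev : (fun r => h (scale r)) =ᶠ[nhds q] fun r => t ^ m * h r := by
    filter_upwards [hV] with r hr using hh r hr.1 t ht hr.2
  have hleft : HasFDerivAt (fun r => h (scale r)) ((fderiv ℝ h (scale q)).comp scale) q :=
    (hd.differentiableAt (hU.mem_nhds htq)).hasFDerivAt.comp q scale.hasFDerivAt
  have hright : HasFDerivAt (fun r => t ^ m * h r) (t ^ m • fderiv ℝ h q) q :=
    (hd.differentiableAt (hU.mem_nhds hq)).hasFDerivAt.const_mul _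
  simpa [scale] using
    congrArg (· w) ((hleft.congr_of_eventuallyEq hev.symm).unique hright)

lemma fderiv_horizontal (hU : IsOpen U) (hh : IsFiberHomogeneous U m h)
    (hd : DifferentiableOn ℝ h U) (u : E) :
    IsFiberHomogeneous U m (fun q => fderiv ℝ h q (u, 0)) := by
  intro q hq t ht htq
  simpa using hh.fderiv_apply_smul hU hd (u, 0) hq ht htq

lemma fderiv_vertical (hU : IsOpen U) (hh : IsFiberHomogeneous U (m + 1) h)
    (hd : DifferentiableOn ℝ h U) (u : F) :
    IsFiberHomogeneous U m (fun q => fderiv ℝ h q (0, u)) := by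
  intro q hq t ht htq
  have hsmul := hh.fderiv_apply_smul hU hd (0, u) hq ht htq
  rw [show ((0 : E), t • u) = t • ((0 : E), u) by simp, map_smul, smul_eq_mul] at hsmul
  refine mul_left_cancel₀ ht.ne' (hsmul.trans ?_)
  ring

end IsFiberHomogeneous

lemma contDiffOn_pd {U : Set (Pt n)} (hU : IsOpen U) {f : Pt n → ℝ}
    (hf : ContDiffOn ℝ (⊤ : ℕ∞) f U) (v : Pt n) : ContDiffOn ℝ (⊤ : ℕ∞) (pd v f) U :=
  (hf.fderiv_of_isOpen hU (by simp)).clm_apply contDiffOn_const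

lemma apply_vertical_eq_sum (ℓ : Pt n →L[ℝ] ℝ) (v : Fin n → ℝ) :
    ℓ (0, v) = ∑ j, v j * ℓ (ey j) := by
  have hv : ((0 : Fin n → ℝ), v) = ∑ j, v j • ey j := by
    ext k <;> simp [ey, Prod.fst_sum, Prod.snd_sum, Finset.sum_apply, Pi.single_apply]
  simp [hv, map_sum]

namespace Chart

lemma differentiableAt_of_contDiffOn {f : Pt n → ℝ} (hf : ContDiffOn ℝ (⊤ : ℕ∞) f fc.U)
    {p : Pt n} (hp : p ∈ fc.U) : DifferentiableAt ℝ f p :=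
  (hf.contDiffAt (fc.hUopen.mem_nhds hp)).differentiableAt (by simp)

def energy : Pt n → ℝ := fun q => fc.F q ^ 2

lemma g_eq (i j : Fin n) {p : Pt n} (hp : p ∈ fc.U) :
    fc.g i j p = (1 / 2) * pd (ey i) (pd (ey j) fc.energy) p :=
  fc.gdef i j p hp

lemma contDiffOn_energy : ContDiffOn ℝ (⊤ : ℕ∞) fc.energy fc.U := fc.Fsmooth.pow 2

lemma isFiberHomogeneous_energy : IsFiberHomogeneous fc.U 2 fc.energy := by
  have hF : IsFiberHomogeneous fc.U 1 fc.F := by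
    intro q hq t ht htq
    rw [pow_one]
    exact fc.Fhomog q hq t ht htq
  exact hF.pow 2

lemma isFiberHomogeneous_pd_ey_energy (i : Fin n) :
    IsFiberHomogeneous fc.U 1 (pd (ey i) fc.energy) :=
  fc.isFiberHomogeneous_energy.fderiv_vertical fc.hUopen
    (fc.contDiffOn_energy.differentiableOn (by simp)) (Pi.single i 1)

lemma isFiberHomogeneous_pd_ex_energy (k : Fin n) :
    IsFiberHomogeneous fc.U 2 (pd (ex k) fc.energy) :=
  fc.isFiberHomogeneous_energy.fderiv_horizontal fc.hUopen
    (fc.contDiffOn_energy.differentiableOn (by simp)) (Pi.single k 1)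

lemma isFiberHomogeneous_g (i j : Fin n) : IsFiberHomogeneous fc.U 0 (fc.g i j) := by
  have hEyy := (fc.isFiberHomogeneous_pd_ey_energy j).fderiv_vertical fc.hUopen
    ((contDiffOn_pd fc.hUopen fc.contDiffOn_energy _).differentiableOn (by simp))
    (Pi.single i 1)
  exact (hEyy.const_mul (1 / 2)).congr fun _ hq => (fc.g_eq i j hq).symm

lemma pd_ey_pd_ey_energy_comm (i j : Fin n) {p : Pt n} (hp : p ∈ fc.U) :
    pd (ey i) (pd (ey j) fc.energy) p = pd (ey j) (pd (ey i) fc.energy) p := by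
  have hE : ContDiffAt ℝ (⊤ : ℕ∞) fc.energy p :=
    fc.contDiffOn_energy.contDiffAt (fc.hUopen.mem_nhds hp)
  have hsymm : IsSymmSndFDerivAt ℝ fc.energy p :=
    hE.isSymmSndFDerivAt (by
      rw [minSmoothness_of_isRCLikeNormedField]; exact WithTop.coe_le_coe.mpr le_top)
  have hd : DifferentiableAt ℝ (fderiv ℝ fc.energy) p :=
    (hE.fderiv_right (m := (⊤ : ℕ∞)) le_rfl).differentiableAt (by simp)
  have hsecond : ∀ v w : Pt n, pd w (pd v fc.energy) p = fderiv ℝ (fderiv ℝ fc.energy) p w v :=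
    fun v w => by
      change fderiv ℝ (fun q => fderiv ℝ fc.energy q v) p w = _
      rw [fderiv_clm_apply hd (differentiableAt_const v)]
      simp
  rw [hsecond, hsecond, hsymm]

lemma sum_g_mul_y (i : Fin n) {p : Pt n} (hp : p ∈ fc.U) :
    ∑ j, fc.g i j p * p.2 j = (1 / 2) * pd (ey i) fc.energy p := by
  have hEuler := (fc.isFiberHomogeneous_pd_ey_energy i).fderiv_apply_vertical fc.hUopen hp
    (fc.differentiableAt_of_contDiffOn (contDiffOn_pd fc.hUopen fc.contDiffOn_energy _) hp)
  calc ∑ j, fc.g i j p * p.2 j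
      = (1 / 2) * ∑ j, p.2 j * pd (ey j) (pd (ey i) fc.energy) p := by
        rw [Finset.mul_sum]
        refine Finset.sum_congr rfl fun j _ => ?_
        rw [fc.g_eq i j hp, fc.pd_ey_pd_ey_energy_comm i j hp]
        ring
    _ = (1 / 2) * pd (ey i) fc.energy p := by
        rw [apply_vertical_eq_sum, Nat.cast_one, one_mul] at hEuler
        exact congrArg (1 / 2 * ·) hEuler

lemma sum_g_mul_y' (j : Fin n) {p : Pt n} (hp : p ∈ fc.U) :
    ∑ i, fc.g i j p * p.2 i = (1 / 2) * pd (ey j) fc.energy p := by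
  rw [← fc.sum_g_mul_y j hp]
  exact Finset.sum_congr rfl fun i _ => by rw [fc.gsymm i j p hp]

lemma sum_sum_g_mul_y_mul_y {p : Pt n} (hp : p ∈ fc.U) :
    ∑ i, ∑ j, fc.g i j p * p.2 i * p.2 j = fc.energy p := by
  have hEuler := fc.isFiberHomogeneous_energy.fderiv_apply_vertical fc.hUopen hp
    (fc.differentiableAt_of_contDiffOn fc.contDiffOn_energy hp)
  calc ∑ i, ∑ j, fc.g i j p * p.2 i * p.2 j
      = (1 / 2) * ∑ i, p.2 i * pd (ey i) fc.energy p := by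
        rw [Finset.mul_sum]
        refine Finset.sum_congr rfl fun i _ => ?_
        rw [← mul_assoc, mul_comm _ (p.2 i), mul_assoc, ← fc.sum_g_mul_y i hp, Finset.mul_sum]
        exact Finset.sum_congr rfl fun j _ => by ring
    _ = fc.energy p := by
        rw [apply_vertical_eq_sum] at hEuler
        change 1 / 2 * ∑ i, p.2 i * fderiv ℝ fc.energy p (ey i) = _
        rw [hEuler]
        push_cast
        ring

end Chart

section MatrixSmooth

variable {X : Type*} [NormedAddCommGroup X] [NormedSpace ℝ X] {s : Set X} {k : WithTop ℕ∞}
  {ι : Type*} [Fintype ι] [DecidableEq ι] {M : X → Matrix ι ι ℝ}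

lemma contDiffOn_matrix_det (hM : ∀ i j, ContDiffOn ℝ k (fun x => M x i j) s) :
    ContDiffOn ℝ k (fun x => (M x).det) s := by
  simp only [Matrix.det_apply, Units.smul_def, zsmul_eq_mul]
  exact ContDiffOn.sum fun σ _ =>
    contDiffOn_const.mul (contDiffOn_prod fun i _ => hM (σ i) i)

lemma contDiffOn_matrix_inv_apply (hM : ∀ i j, ContDiffOn ℝ k (fun x => M x i j) s)
    (hdet : ∀ x ∈ s, (M x).det ≠ 0) (i j : ι) :
    ContDiffOn ℝ k (fun x => (M x)⁻¹ i j) s := by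
  have hadj : ContDiffOn ℝ k (fun x => (M x).adjugate i j) s := by
    simp only [Matrix.adjugate_apply]
    refine contDiffOn_matrix_det fun a b => ?_
    by_cases hab : a = j <;> simp [Matrix.updateRow_apply, hab, contDiffOn_const, hM]
  refine (((contDiffOn_matrix_det hM).inv hdet).mul hadj).congr fun x _ => ?_
  simp [Matrix.inv_def, Ring.inverse_eq_inv']

end MatrixSmooth

namespace Chart

def gMat (q : Pt n) : Matrix (Fin n) (Fin n) ℝ := Matrix.of fun i j => fc.g i j q

lemma gMat_mul_ginv {q : Pt n} (hq : q ∈ fc.U) :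
    fc.gMat q * Matrix.of (fun i j => fc.ginv i j q) = 1 := by
  ext i j
  simpa [Matrix.mul_apply, gMat, Matrix.one_apply] using fc.hginv i j q hq

lemma ginv_eq_inv {q : Pt n} (hq : q ∈ fc.U) (i j : Fin n) :
    fc.ginv i j q = (fc.gMat q)⁻¹ i j := by
  rw [Matrix.inv_eq_right_inv (fc.gMat_mul_ginv hq)]
  rfl

lemma det_gMat_ne_zero {q : Pt n} (hq : q ∈ fc.U) : (fc.gMat q).det ≠ 0 :=
  left_ne_zero_of_mul_eq_one (by rw [← Matrix.det_mul, fc.gMat_mul_ginv hq, Matrix.det_one])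

def sprayCovector (j : Fin n) : Pt n → ℝ :=
  fun q => (∑ k, pd (ey j) (pd (ex k) fc.energy) q * q.2 k) - pd (ex j) fc.energy q

lemma spray_eq (i : Fin n) {q : Pt n} (hq : q ∈ fc.U) :
    fc.spray i q = (1 / 4) * ∑ j, fc.ginv i j q * fc.sprayCovector j q :=
  fc.spraydef i q hq

lemma contDiffOn_sprayCovector (j : Fin n) :
    ContDiffOn ℝ (⊤ : ℕ∞) (fc.sprayCovector j) fc.U := by
  have hEx k := contDiffOn_pd fc.hUopen fc.contDiffOn_energy (ex k)
  refine (ContDiffOn.sum fun k _ => (contDiffOn_pd fc.hUopen (hEx k) _).mul ?_).sub (hEx j)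
  exact ((contDiff_apply ℝ ℝ k).comp contDiff_snd).contDiffOn

lemma differentiableOn_spray (i : Fin n) : DifferentiableOn ℝ (fc.spray i) fc.U := by
  have hinv := contDiffOn_matrix_inv_apply (M := fc.gMat) (fun a b => fc.gsmooth a b)
    (fun q hq => fc.det_gMat_ne_zero hq) i
  have hformula : ContDiffOn ℝ (⊤ : ℕ∞)
      (fun q => (1 / 4) * ∑ j, (fc.gMat q)⁻¹ i j * fc.sprayCovector j q) fc.U :=
    contDiffOn_const.mul (ContDiffOn.sum fun j _ => (hinv j).mul (fc.contDiffOn_sprayCovector j))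
  refine (hformula.differentiableOn (by simp)).congr fun q hq => ?_
  simp only [fc.spray_eq i hq, fc.ginv_eq_inv hq]

lemma sum_g_mul_spray (l : Fin n) {q : Pt n} (hq : q ∈ fc.U) :
    ∑ i, fc.g l i q * fc.spray i q = (1 / 4) * fc.sprayCovector l q := by
  calc ∑ i, fc.g l i q * fc.spray i q
      = (1 / 4) * ∑ j, (∑ i, fc.g l i q * fc.ginv i j q) * fc.sprayCovector j q := by
        simp only [fc.spray_eq _ hq, Finset.mul_sum, Finset.sum_mul]
        rw [Finset.sum_comm]
        exact Finset.sum_congr rfl fun _ _ => Finset.sum_congr rfl fun _ _ => by ring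
    _ = (1 / 4) * fc.sprayCovector l q := by simp [fc.hginv l _ q hq]

lemma isFiberHomogeneous_ginv (i j : Fin n) : IsFiberHomogeneous fc.U 0 (fc.ginv i j) := by
  intro q hq t ht htq
  have hg : fc.gMat (q.1, t • q.2) = fc.gMat q := by
    ext a b
    simpa [gMat] using fc.isFiberHomogeneous_g a b q hq t ht htq
  rw [fc.ginv_eq_inv hq, fc.ginv_eq_inv htq, hg, pow_zero, one_mul]

lemma isFiberHomogeneous_sprayCovector (j : Fin n) :
    IsFiberHomogeneous fc.U 2 (fc.sprayCovector j) := by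
  have hy (k : Fin n) : IsFiberHomogeneous fc.U 1 (fun q => q.2 k) := fun _ _ _ _ _ => by simp
  have hExy (k : Fin n) := (fc.isFiberHomogeneous_pd_ex_energy k).fderiv_vertical fc.hUopen
    ((contDiffOn_pd fc.hUopen fc.contDiffOn_energy _).differentiableOn (by simp))
    (Pi.single j 1)
  exact (IsFiberHomogeneous.sum _ fun k _ => (hExy k).mul (hy k)).sub
    (fc.isFiberHomogeneous_pd_ex_energy j)

lemma isFiberHomogeneous_spray (i : Fin n) : IsFiberHomogeneous fc.U 2 (fc.spray i) :=
  ((IsFiberHomogeneous.sum _ fun j _ => (fc.isFiberHomogeneous_ginv i j).mul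
    (fc.isFiberHomogeneous_sprayCovector j)).const_mul (1 / 4)).congr
    fun _ hq => (fc.spray_eq i hq).symm

lemma isFiberHomogeneous_N (k j : Fin n) : IsFiberHomogeneous fc.U 1 (fc.N k j) :=
  ((fc.isFiberHomogeneous_spray j).fderiv_vertical fc.hUopen (fc.differentiableOn_spray j)
    (Pi.single k 1)).congr fun q hq => (fc.Ndef k j q hq).symm

lemma fderiv_N_vertical (k j : Fin n) {p : Pt n} (hp : p ∈ fc.U) :
    fderiv ℝ (fc.N k j) p (0, p.2) = fc.N k j p := by
  simpa using (fc.isFiberHomogeneous_N k j).fderiv_apply_vertical fc.hUopen hp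
    (fc.differentiableAt_of_contDiffOn (fc.Nsmooth k j) hp)

end Chart

namespace Chart

lemma sum_y_mul_sprayCovector {q : Pt n} (hq : q ∈ fc.U) :
    ∑ j, q.2 j * fc.sprayCovector j q = ∑ m, pd (ex m) fc.energy q * q.2 m := by
  have hEuler (m : Fin n) : ∑ j, q.2 j * pd (ey j) (pd (ex m) fc.energy) q
      = 2 * pd (ex m) fc.energy q := by
    have := (fc.isFiberHomogeneous_pd_ex_energy m).fderiv_apply_vertical fc.hUopen hq
      (fc.differentiableAt_of_contDiffOn (contDiffOn_pd fc.hUopen fc.contDiffOn_energy _) hq)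
    rw [apply_vertical_eq_sum] at this
    exact_mod_cast this
  calc ∑ j, q.2 j * fc.sprayCovector j q
      = ∑ m, (∑ j, q.2 j * pd (ey j) (pd (ex m) fc.energy) q) * q.2 m
          - ∑ m, pd (ex m) fc.energy q * q.2 m := by
        simp only [sprayCovector, mul_sub, Finset.sum_sub_distrib, Finset.mul_sum,
          Finset.sum_mul]
        rw [Finset.sum_comm]
        congr 1
        · exact Finset.sum_congr rfl fun _ _ => Finset.sum_congr rfl fun _ _ => by ring
        · exact Finset.sum_congr rfl fun _ _ => by ring
    _ = ∑ m, pd (ex m) fc.energy q * q.2 m := by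
        simp only [hEuler, mul_assoc, ← Finset.mul_sum]
        ring

lemma sum_pd_energy_mul_spray {q : Pt n} (hq : q ∈ fc.U) :
    ∑ l, pd (ey l) fc.energy q * fc.spray l q
      = (1 / 2) * ∑ m, pd (ex m) fc.energy q * q.2 m := by
  have hEy (l : Fin n) : pd (ey l) fc.energy q = 2 * ∑ i, fc.g i l q * q.2 i := by
    rw [fc.sum_g_mul_y' l hq]
    ring
  calc ∑ l, pd (ey l) fc.energy q * fc.spray l q
      = 2 * ∑ i, q.2 i * ∑ l, fc.g i l q * fc.spray l q := by
        simp only [hEy, Finset.mul_sum, Finset.sum_mul]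
        rw [Finset.sum_comm]
        exact Finset.sum_congr rfl fun _ _ => Finset.sum_congr rfl fun _ _ => by ring
    _ = (1 / 2) * ∑ m, pd (ex m) fc.energy q * q.2 m := by
        simp only [fc.sum_g_mul_spray _ hq, ← fc.sum_y_mul_sprayCovector hq, Finset.mul_sum]
        exact Finset.sum_congr rfl fun _ _ => by ring

lemma pd_ey_sum_pd_energy_mul_spray (k : Fin n) {p : Pt n} (hp : p ∈ fc.U) :
    pd (ey k) (fun q => ∑ l, pd (ey l) fc.energy q * fc.spray l q) p
      = ∑ l, pd (ey l) fc.energy p * fc.N k l p + 2 * ∑ l, fc.g k l p * fc.spray l p := by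
  have hS : HasFDerivAt (fun q => ∑ l, pd (ey l) fc.energy q * fc.spray l q)
      (∑ l, (pd (ey l) fc.energy p • fderiv ℝ (fc.spray l) p
        + fc.spray l p • fderiv ℝ (pd (ey l) fc.energy) p)) p :=
    HasFDerivAt.fun_sum fun l _ => (fc.differentiableAt_of_contDiffOn
      (contDiffOn_pd fc.hUopen fc.contDiffOn_energy (ey l)) hp).hasFDerivAt.mul
      ((fc.differentiableOn_spray l).differentiableAt (fc.hUopen.mem_nhds hp)).hasFDerivAt
  rw [pd, hS.fderiv]
  simp only [sum_apply, add_apply, FunLike.coe_smul, Pi.smul_apply, smul_eq_mul,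
    Finset.sum_add_distrib, Finset.mul_sum]
  congr 1 <;> refine Finset.sum_congr rfl fun l _ => ?_
  · rw [fc.Ndef k l p hp]
    rfl
  · change fc.spray l p * pd (ey k) (pd (ey l) fc.energy) p = _
    rw [fc.g_eq k l hp]
    ring

lemma pd_ey_sum_pd_ex_energy_mul_y (k : Fin n) {p : Pt n} (hp : p ∈ fc.U) :
    pd (ey k) (fun q => (1 / 2) * ∑ m, pd (ex m) fc.energy q * q.2 m) p
      = (1 / 2) * (pd (ex k) fc.energy p + ∑ m, pd (ey k) (pd (ex m) fc.energy) p * p.2 m) := by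
  let y (m : Fin n) : Pt n →L[ℝ] ℝ :=
    (ContinuousLinearMap.proj m).comp (ContinuousLinearMap.snd ℝ _ _)
  have hT : HasFDerivAt (fun q => (1 / 2) * ∑ m, pd (ex m) fc.energy q * q.2 m)
      ((1 / 2 : ℝ) • ∑ m, (pd (ex m) fc.energy p • y m
        + p.2 m • fderiv ℝ (pd (ex m) fc.energy) p)) p :=
    (HasFDerivAt.fun_sum fun m _ => (fc.differentiableAt_of_contDiffOn
      (contDiffOn_pd fc.hUopen fc.contDiffOn_energy (ex m)) hp).hasFDerivAt.mul
      (y m).hasFDerivAt).const_mul _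
  have hy (m : Fin n) : y m (ey k) = if m = k then 1 else 0 := by
    simp [y, ey, Pi.single_apply]
  rw [pd, hT.fderiv]
  simp only [sum_apply, add_apply, FunLike.coe_smul, Pi.smul_apply, smul_eq_mul, hy,
    Finset.sum_add_distrib, mul_ite, mul_one, mul_zero, Finset.sum_ite_eq', Finset.mem_univ,
    if_true]
  congr 2
  exact Finset.sum_congr rfl fun m _ => mul_comm _ _

/-- Differentiate `sum_pd_energy_mul_spray` in the direction `∂/∂y^k`. -/
lemma sum_pd_energy_mul_N (k : Fin n) {p : Pt n} (hp : p ∈ fc.U) :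
    ∑ l, pd (ey l) fc.energy p * fc.N k l p = pd (ex k) fc.energy p := by
  have hk : pd (ey k) (fun q => ∑ l, pd (ey l) fc.energy q * fc.spray l q) p
      = pd (ey k) (fun q => (1 / 2) * ∑ m, pd (ex m) fc.energy q * q.2 m) p := by
    rw [pd, pd, Filter.EventuallyEq.fderiv_eq (Filter.eventuallyEq_of_mem
      (fc.hUopen.mem_nhds hp) fun q hq => fc.sum_pd_energy_mul_spray hq)]
  rw [fc.pd_ey_sum_pd_energy_mul_spray k hp, fc.pd_ey_sum_pd_ex_energy_mul_y k hp,
    fc.sum_g_mul_spray k hp, sprayCovector] at hk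
  linarith

lemma fderiv_energy_ddx (k : Fin n) {p : Pt n} (hp : p ∈ fc.U) :
    fderiv ℝ fc.energy p (ddx fc k p) = 0 := by
  have hsplit : ddx fc k p = ex k + ((0 : Fin n → ℝ), fun j => -fc.N k j p) := by
    ext <;> simp [ddx, ex]
  rw [hsplit, map_add, apply_vertical_eq_sum]
  change pd (ex k) fc.energy p + ∑ j, -fc.N k j p * pd (ey j) fc.energy p = 0
  rw [← fc.sum_pd_energy_mul_N k hp]
  simp only [neg_mul, Finset.sum_neg_distrib, mul_comm (fc.N k _ p)]
  ring

end Chart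

lemma dely_ddx (i k : Fin n) (p : Pt n) : dely fc i p (ddx fc k p) = 0 := by
  simp [dely, ddx, Pi.single_apply]

lemma dely_ey (i k : Fin n) (p : Pt n) : dely fc i p (ey k) = if i = k then 1 else 0 := by
  simp [dely, ey, Pi.single_apply]

lemma dely_LV (i : Fin n) (p : Pt n) : dely fc i p (LV p) = p.2 i := by
  simp [dely, LV]

lemma Gs_apply_ddx (p v : Pt n) (k : Fin n) :
    Gs fc p v (ddx fc k p) = ∑ i, fc.g i k p * v.1 i := by
  simp only [Gs, dely_ddx, mul_zero, add_zero]
  simp [ddx, Pi.single_apply, mul_comm]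

lemma Gs_apply_ey (p v : Pt n) (k : Fin n) :
    Gs fc p v (ey k) = ∑ i, fc.g i k p * dely fc i p v := by
  simp only [Gs, dely_ey]
  simp [ey, mul_comm]

/-- `(δ/δx^k, ∂/∂y^k)` is a frame with dual coframe `(dx^k, δy^k)`. -/
lemma Gs_eq_sum_frame (p w v : Pt n) :
    Gs fc p w v = ∑ k, v.1 k * Gs fc p w (ddx fc k p) + ∑ k, dely fc k p v * Gs fc p w (ey k) := by
  simp only [Gs_apply_ddx, Gs_apply_ey]
  simp only [Gs, mul_add, Finset.sum_add_distrib, Finset.mul_sum]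
  congr 1 <;> rw [Finset.sum_comm] <;>
    exact Finset.sum_congr rfl fun _ _ => Finset.sum_congr rfl fun _ _ => by ring

lemma Gs_comm {p : Pt n} (hp : p ∈ fc.U) (v w : Pt n) : Gs fc p v w = Gs fc p w v := by
  unfold Gs
  rw [Finset.sum_comm]
  exact Finset.sum_congr rfl fun j _ => Finset.sum_congr rfl fun i _ => by
    rw [fc.gsymm i j p hp]
    ring

lemma Gs_zero_left (p w : Pt n) : Gs fc p 0 w = 0 := by
  simp [Gs, dely]

lemma Gs_neg_left (p v w : Pt n) : Gs fc p (-v) w = -Gs fc p v w := by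
  simp [Gs, dely, mul_add, add_mul, Finset.sum_add_distrib]
  ring

lemma Gs_LV_ddx (k : Fin n) (p : Pt n) : Gs fc p (LV p) (ddx fc k p) = 0 := by
  simp [Gs_apply_ddx, LV]

lemma Gs_LV_ey (k : Fin n) (p : Pt n) : Gs fc p (LV p) (ey k) = ∑ i, fc.g i k p * p.2 i := by
  simp [Gs_apply_ey, dely_LV]

lemma Gs_LV_LV {p : Pt n} (hp : p ∈ fc.U) : Gs fc p (LV p) (LV p) = fc.energy p := by
  rw [← fc.sum_sum_g_mul_y_mul_y hp]
  simp only [Gs, dely_LV]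
  simp [LV, mul_assoc]

lemma contDiffOn_LV : ContDiffOn ℝ (⊤ : ℕ∞) (LV : VF n) fc.U :=
  (contDiff_const.prodMk contDiff_snd).contDiffOn

lemma contDiffOn_dyv (k : Fin n) : ContDiffOn ℝ (⊤ : ℕ∞) (dyv k : VF n) fc.U :=
  contDiffOn_const

lemma contDiffOn_ddx (k : Fin n) : ContDiffOn ℝ (⊤ : ℕ∞) (ddx fc k) fc.U :=
  contDiffOn_const.prodMk (contDiffOn_pi.mpr fun j => (fc.Nsmooth k j).neg)

lemma fderiv_LV (p : Pt n) :
    fderiv ℝ (LV : VF n) p = (0 : Pt n →L[ℝ] (Fin n → ℝ)).prod (ContinuousLinearMap.snd ℝ _ _) :=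
  ContinuousLinearMap.fderiv ((0 : Pt n →L[ℝ] (Fin n → ℝ)).prod (ContinuousLinearMap.snd ℝ _ _))

lemma lie_LV_LV (p : Pt n) : lie (LV : VF n) LV p = 0 := sub_self _

lemma lie_LV_dyv (k : Fin n) (p : Pt n) : lie (LV : VF n) (dyv k) p = -ey k := by
  have hconst : fderiv ℝ (dyv k : VF n) p = 0 := fderiv_const_apply _
  simp [lie, hconst, fderiv_LV, dyv, ey]

lemma lie_LV_ddx (k : Fin n) {p : Pt n} (hp : p ∈ fc.U) : lie (LV : VF n) (ddx fc k) p = 0 := by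
  have hddx : HasFDerivAt (ddx fc k) ((0 : Pt n →L[ℝ] (Fin n → ℝ)).prod
      (ContinuousLinearMap.pi fun j => -fderiv ℝ (fc.N k j) p)) p :=
    (hasFDerivAt_const _ _).prodMk (hasFDerivAt_pi.mpr fun j =>
      (fc.differentiableAt_of_contDiffOn (fc.Nsmooth k j) hp).hasFDerivAt.neg)
  ext j
  · simp [lie, hddx.fderiv, fderiv_LV, ddx, LV]
  · simp [lie, hddx.fderiv, fderiv_LV, ddx, LV, fc.fderiv_N_vertical k j hp]

section LeviCivita

variable {fc} {nab : VF n → VF n → VF n}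

lemma Gs_nab_LV_LV_eq_koszul (hnab : IsLeviCivita fc nab) {Z : VF n}
    (hZ : ContDiffOn ℝ (⊤ : ℕ∞) Z fc.U) {p : Pt n} (hp : p ∈ fc.U) :
    Gs fc p (nab LV LV p) (Z p) = Dv LV (fun q => Gs fc q (LV q) (Z q)) p
      - (1 / 2) * fderiv ℝ fc.energy p (Z p) - Gs fc p (lie LV Z p) (LV p) := by
  have hK := hnab LV LV Z (contDiffOn_LV fc) (contDiffOn_LV fc) hZ p hp
  have hE : Dv Z (fun q => Gs fc q (LV q) (LV q)) p = fderiv ℝ fc.energy p (Z p) := by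
    rw [Dv, Filter.EventuallyEq.fderiv_eq (Filter.eventuallyEq_of_mem (fc.hUopen.mem_nhds hp)
      fun q hq => Gs_LV_LV fc hq)]
  rw [hE, lie_LV_LV, Gs_zero_left] at hK
  linarith

lemma Gs_nab_LV_LV_ddx (hnab : IsLeviCivita fc nab) (k : Fin n) {p : Pt n} (hp : p ∈ fc.U) :
    Gs fc p (nab LV LV p) (ddx fc k p) = 0 := by
  rw [Gs_nab_LV_LV_eq_koszul hnab (contDiffOn_ddx fc k) hp, fc.fderiv_energy_ddx k hp,
    lie_LV_ddx fc k hp, Gs_zero_left]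
  simp [Dv, Gs_LV_ddx]

lemma Gs_nab_LV_LV_ey (hnab : IsLeviCivita fc nab) (k : Fin n) {p : Pt n} (hp : p ∈ fc.U) :
    Gs fc p (nab LV LV p) (ey k) = Gs fc p (LV p) (ey k) := by
  have hEy := contDiffOn_pd fc.hUopen fc.contDiffOn_energy (ey k)
  have hL : Dv LV (fun q => Gs fc q (LV q) (ey k)) p = (1 / 2) * pd (ey k) fc.energy p := by
    have hEuler := (fc.isFiberHomogeneous_pd_ey_energy k).fderiv_apply_vertical fc.hUopen hp
      (fc.differentiableAt_of_contDiffOn hEy hp)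
    rw [Dv, Filter.EventuallyEq.fderiv_eq (Filter.eventuallyEq_of_mem (fc.hUopen.mem_nhds hp)
      fun q hq => (Gs_LV_ey fc k q).trans (fc.sum_g_mul_y' k hq)),
      fderiv_const_mul (fc.differentiableAt_of_contDiffOn hEy hp)]
    rw [Nat.cast_one, one_mul] at hEuler
    exact congrArg (1 / 2 * ·) hEuler
  have hbracket : Gs fc p (lie LV (dyv k) p) (LV p) = -((1 / 2) * pd (ey k) fc.energy p) := by
    rw [lie_LV_dyv, Gs_neg_left, Gs_comm fc hp, Gs_LV_ey, fc.sum_g_mul_y' k hp]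
  have hK := Gs_nab_LV_LV_eq_koszul hnab (contDiffOn_dyv fc k) hp
  change Gs fc p (nab LV LV p) (ey k) = Dv LV (fun q => Gs fc q (LV q) (ey k)) p
    - 1 / 2 * pd (ey k) fc.energy p - Gs fc p (lie LV (dyv k) p) (LV p) at hK
  rw [hK, hL, hbracket, Gs_LV_ey, fc.sum_g_mul_y' k hp]
  ring

lemma Gs_nab_LV_LV (hnab : IsLeviCivita fc nab) {p : Pt n} (hp : p ∈ fc.U) (v : Pt n) :
    Gs fc p (nab LV LV p) v = Gs fc p (LV p) v := by
  rw [Gs_eq_sum_frame, Gs_eq_sum_frame fc p (LV p)]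
  simp only [Gs_nab_LV_LV_ddx hnab _ hp, Gs_LV_ddx, Gs_nab_LV_LV_ey hnab _ hp]

end LeviCivita

/-- The Sasaki lifted metric `G` is bundle-like for the
foliation `V^⊥TM` (the distribution `G`-orthogonal to the vertical Liouville
field `L` in `TTM`): `G(∇_L L, X) + G(∇_L L, X) = 0` for every section `X`
of `V^⊥TM`, where `∇` is the Levi-Civita connection of `G`. -/
theorem sasaki_bundle_like_Vperp {n : ℕ} (fc : Chart n)
    (nab : VF n → VF n → VF n) (hnab : IsLeviCivita fc nab) :
    ∀ X : VF n, (∀ p ∈ fc.U, InVperp fc p (X p)) →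
      ∀ p ∈ fc.U,
        Gs fc p (nab LV LV p) (X p) + Gs fc p (nab LV LV p) (X p) = 0 := by
  intro X hX p hp
  rw [Gs_nab_LV_LV hnab hp, Gs_comm fc hp, hX p hp, add_zero]

end FinslerFoliations

end
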